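/- Let A, B be complex n×n Hermitian projections, and V a complex n×n matrix with Tr(VVᴴ) = 1. Set A' = Φ(A), B' = Φ(B*) (realification of the entrywise complex conjugate of B), and V' = (1/√2)Φ(V). Then Tr(A' V' B'ᵀ V'ᵀ) = Tr(A V Bᵀ Vᴴ); in particular the quantum expectation value Tr(A V Bᵀ Vᴴ) (which is real) is reproduced by the real matrices A', B', V'. -/
import Mathlib

open Matrix Kronecker

def Phi {n : ℕ} (A : Matrix (Fin n) (Fin n) ℂ) :
    Matrix (Fin n × Fin 2) (Fin n × Fin 2) ℝ :=
  fun p q => !![(A p.1 q.1).re, -(A p.1 q.1).im;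
                (A p.1 q.1).im,  (A p.1 q.1).re] p.2 q.2

lemma Phi_mul {n : ℕ} (X Y : Matrix (Fin n) (Fin n) ℂ) :
    Phi (X * Y) = Phi X * Phi Y := by
  ext p q
  rcases p with ⟨i, s⟩
  rcases q with ⟨j, t⟩
  simp only [Phi, Matrix.mul_apply, Fintype.sum_prod_type]
  fin_cases s <;> fin_cases t <;>
    simp [Complex.re_sum, Complex.im_sum, Fin.sum_univ_two, Finset.sum_add_distrib,
      Finset.sum_sub_distrib, mul_comm] <;> ring

lemma Phi_transpose {n : ℕ} (X : Matrix (Fin n) (Fin n) ℂ) :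
    (Phi X)ᵀ = Phi Xᴴ := by
  ext p q
  rcases p with ⟨i, s⟩
  rcases q with ⟨j, t⟩
  fin_cases s <;> fin_cases t <;>
    simp [Phi, Matrix.transpose_apply, Matrix.conjTranspose_apply]

lemma Phi_trace {n : ℕ} (X : Matrix (Fin n) (Fin n) ℂ) :
    (Phi X).trace = 2 * X.trace.re := by
  simp [Matrix.trace, Phi, Fintype.sum_prod_type, Fin.sum_univ_two, Complex.re_sum,
    Finset.sum_add_distrib, two_mul]

/-- The quantum expectation value `Tr(A V Bᵀ Vᴴ)` is reproduced by the realified data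
`A' = Φ(A)`, `B' = Φ(B*)`, `V' = (1/√2) Φ(V)`. -/
theorem realification_expectation (n : ℕ) (A B V : Matrix (Fin n) (Fin n) ℂ)
    (hA2 : A * A = A) (hAh : Aᴴ = A) (hB2 : B * B = B) (hBh : Bᴴ = B)
    (hV : (V * Vᴴ).trace = 1) :
    ((Phi A * (((1 : ℝ) / Real.sqrt 2) • Phi V) * (Phi (B.map (starRingEnd ℂ)))ᵀ *
        (((1 : ℝ) / Real.sqrt 2) • Phi V)ᵀ).trace : ℂ)
      = (A * V * Bᵀ * Vᴴ).trace := by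
  have hmapH : (B.map (starRingEnd ℂ))ᴴ = Bᵀ := by
    ext i j
    simp [Matrix.conjTranspose_apply, Matrix.map_apply]
  have key : Phi A * (((1 : ℝ) / Real.sqrt 2) • Phi V) * (Phi (B.map (starRingEnd ℂ)))ᵀ *
        (((1 : ℝ) / Real.sqrt 2) • Phi V)ᵀ
      = (((1 : ℝ) / 2)) • Phi (A * V * Bᵀ * Vᴴ) := by
    rw [Matrix.transpose_smul, Phi_transpose, Phi_transpose, hmapH]
    rw [Phi_mul, Phi_mul, Phi_mul]
    have h2 : ((1 : ℝ) / Real.sqrt 2) * ((1 : ℝ) / Real.sqrt 2) = 1 / 2 := by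
      rw [div_mul_div_comm, one_mul, Real.mul_self_sqrt (by norm_num)]
    simp only [Matrix.smul_mul, Matrix.mul_smul, smul_smul]
    rw [h2]
  rw [key]
  rw [Matrix.trace_smul, Phi_trace]
  have hreal : ((A * V * Bᵀ * Vᴴ).trace.re : ℂ) = (A * V * Bᵀ * Vᴴ).trace := by
    rw [← Complex.conj_eq_iff_re, starRingEnd_apply, ← Matrix.trace_conjTranspose]
    have hBt : (Bᵀ)ᴴ = Bᵀ := by
      ext i j
      have := congrFun (congrFun hBh j) i
      simpa [Matrix.conjTranspose_apply, Matrix.transpose_apply] using this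
    have hct : (A * V * Bᵀ * Vᴴ)ᴴ = V * Bᵀ * Vᴴ * A := by
      simp only [Matrix.conjTranspose_mul, Matrix.conjTranspose_conjTranspose, hAh, hBt]
      noncomm_ring
    rw [hct, Matrix.trace_mul_comm]
    congr 1
    noncomm_ring
  have h12 : ((1:ℝ)/2) • (2 * (A * V * Bᵀ * Vᴴ).trace.re) = (A * V * Bᵀ * Vᴴ).trace.re := by
    rw [smul_eq_mul]; ring
  rw [h12, hreal]
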